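/- For every real number r with 0 ≤ r < 1: (1/(2π))·∫₀^{2π} (1 - 2·r·cos θ·artanh(r·cos θ)) dθ = 2·√(1-r²) - 1, where artanh is the real inverse hyperbolic tangent. (This computes the boundary value of ∂φ/∂Z on the disc W₀ in the rotationally symmetric case ε = 0 and shows that the constant κ there must equal 1 in order for ∂φ/∂Z to vanish on W_∞.) -/

import Mathlib

noncomputable def artanh (s : ℝ) : ℝ := (1/2) * Real.log ((1 + s) / (1 - s))

lemma hasDerivAt_artanh (s : ℝ) (h : s^2 < 1) :
    HasDerivAt artanh (1/(1-s^2)) s := by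
  have h1 : 0 < 1 + s := by nlinarith
  have h2 : 0 < 1 - s := by nlinarith
  have hq : HasDerivAt (fun s : ℝ => (1 + s) / (1 - s))
      ((1 * (1 - s) - (1 + s) * (-1)) / (1 - s)^2) s :=
    ((hasDerivAt_id s).const_add 1).div ((hasDerivAt_id s).const_sub 1) h2.ne'
  have hpos : (1 + s) / (1 - s) ≠ 0 := by positivity
  have h3 : (1:ℝ) - s^2 ≠ 0 := by nlinarith
  have := (hq.log hpos).const_mul (1/2 : ℝ)
  refine this.congr_deriv ?_
  field_simp
  ring


lemma hasDerivAt_g (r c θ : ℝ) (hc : 0 < c) (hc2 : c^2 = 1 - r^2) :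
    HasDerivAt (fun θ : ℝ => θ + Real.arctan
        (((1-c) * Real.sin θ * Real.cos θ) / (c * Real.cos θ^2 + Real.sin θ^2)))
      (c / (1 - r^2 * Real.cos θ^2)) θ := by
  have hsin := Real.hasDerivAt_sin θ
  have hcos := Real.hasDerivAt_cos θ
  have hpyth := Real.sin_sq_add_cos_sq θ
  have hD : HasDerivAt (fun θ : ℝ => c * Real.cos θ^2 + Real.sin θ^2)
      (c * (2 * Real.cos θ^(2-1) * (-Real.sin θ)) + 2 * Real.sin θ^(2-1) * Real.cos θ) θ :=
    ((hcos.pow 2).const_mul c).add (hsin.pow 2)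
  have hN : HasDerivAt (fun θ : ℝ => (1-c) * Real.sin θ * Real.cos θ)
      (((1-c) * Real.cos θ) * Real.cos θ + ((1-c) * Real.sin θ) * (-Real.sin θ)) θ :=
    (hsin.const_mul (1-c)).mul hcos
  have hDpos : ∀ t : ℝ, 0 < c * Real.cos t^2 + Real.sin t^2 := by
    intro t
    have h1 := Real.sin_sq_add_cos_sq t
    nlinarith [sq_nonneg (Real.sin t), sq_nonneg (Real.cos t)]
  have hDne : (c * Real.cos θ^2 + Real.sin θ^2) ≠ 0 := (hDpos θ).ne'
  have hEpos : 0 < c^2 * Real.cos θ^2 + Real.sin θ^2 := by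
    nlinarith [sq_nonneg (Real.sin θ), sq_nonneg (c * Real.cos θ)]
  have hQ := hN.div hD hDne
  have hA := (Real.hasDerivAt_arctan (((1-c) * Real.sin θ * Real.cos θ) / (c * Real.cos θ^2 + Real.sin θ^2))).comp θ hQ
  have hA' : HasDerivAt (fun θ : ℝ => Real.arctan
        (((1-c) * Real.sin θ * Real.cos θ) / (c * Real.cos θ^2 + Real.sin θ^2)))
      ((c - (c^2 * Real.cos θ^2 + Real.sin θ^2))/(c^2 * Real.cos θ^2 + Real.sin θ^2)) θ := by
    refine hA.congr_deriv ?_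
    have hq2 : 1 + (((1-c) * Real.sin θ * Real.cos θ) / (c * Real.cos θ^2 + Real.sin θ^2))^2
        = (c^2 * Real.cos θ^2 + Real.sin θ^2) / (c * Real.cos θ^2 + Real.sin θ^2)^2 := by
      field_simp [hDne]
      linear_combination (c^2 * Real.cos θ^2 + Real.sin θ^2) * hpyth
    have key : (((1-c) * Real.cos θ) * Real.cos θ + ((1-c) * Real.sin θ) * (-Real.sin θ)) * (c * Real.cos θ^2 + Real.sin θ^2)
        - ((1-c) * Real.sin θ * Real.cos θ) * (c * (2 * Real.cos θ^(2-1) * (-Real.sin θ)) + 2 * Real.sin θ^(2-1) * Real.cos θ)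
        = c - (c^2 * Real.cos θ^2 + Real.sin θ^2) := by
      linear_combination (c - (1-c)*Real.sin θ^2 - c*(c-1)*Real.cos θ^2) * hpyth
    rw [hq2, key]
    field_simp
  have := (hasDerivAt_id θ).add hA'
  refine this.congr_deriv ?_
  have hden : (1:ℝ) - r^2 * Real.cos θ^2 = c^2 * Real.cos θ^2 + Real.sin θ^2 := by nlinarith
  rw [hden]
  field_simp [hEpos.ne']
  ring

theorem stmt_18 (r : ℝ) (hr : 0 ≤ r) (hr1 : r < 1) :
    (1/(2*Real.pi)) * ∫ θ in (0:ℝ)..(2*Real.pi),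
        (1 - 2 * r * Real.cos θ * artanh (r * Real.cos θ))
      = 2 * Real.sqrt (1 - r^2) - 1 := by
  set c := Real.sqrt (1 - r^2) with hcdef
  have h1r : (0:ℝ) < 1 - r^2 := by nlinarith
  have hc : 0 < c := Real.sqrt_pos.mpr h1r
  have hc2 : c^2 = 1 - r^2 := Real.sq_sqrt h1r.le
  set F : ℝ → ℝ := fun θ => -θ - 2*r*Real.sin θ * artanh (r * Real.cos θ)
      + 2*c*(θ + Real.arctan
        (((1-c) * Real.sin θ * Real.cos θ) / (c * Real.cos θ^2 + Real.sin θ^2))) with hFdef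
  have hsq : ∀ θ : ℝ, (r * Real.cos θ)^2 < 1 := by
    intro θ
    have h1 := Real.sin_sq_add_cos_sq θ
    nlinarith [sq_nonneg (Real.sin θ), sq_nonneg (r * Real.sin θ)]
  have hF : ∀ θ : ℝ, HasDerivAt F (1 - 2 * r * Real.cos θ * artanh (r * Real.cos θ)) θ := by
    intro θ
    have hpyth := Real.sin_sq_add_cos_sq θ
    have hat : HasDerivAt (fun θ : ℝ => artanh (r * Real.cos θ))
        (1/(1-(r * Real.cos θ)^2) * (r * -Real.sin θ)) θ :=
      (hasDerivAt_artanh _ (hsq θ)).comp (h₂ := artanh) θ ((Real.hasDerivAt_cos θ).const_mul r)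
    have hprod : HasDerivAt (fun θ : ℝ => 2*r*Real.sin θ * artanh (r * Real.cos θ))
        ((2*r*Real.cos θ) * artanh (r * Real.cos θ)
          + (2*r*Real.sin θ) * (1/(1-(r * Real.cos θ)^2) * (r * -Real.sin θ))) θ :=
      ((Real.hasDerivAt_sin θ).const_mul (2*r)).mul hat
    have hg := (hasDerivAt_g r c θ hc hc2).const_mul (2*c)
    have htot := ((hasDerivAt_id θ).neg.sub hprod).add hg
    refine htot.congr_deriv ?_
    symm
    have hne1 : (1:ℝ) - (r * Real.cos θ)^2 ≠ 0 := by nlinarith [hsq θ]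
    have hne2 : (1:ℝ) - r^2 * Real.cos θ^2 ≠ 0 := by nlinarith [hsq θ]
    field_simp
    linear_combination (-2*r^2) * hpyth + (-2) * hc2
  have hcont : Continuous fun θ : ℝ => 1 - 2 * r * Real.cos θ * artanh (r * Real.cos θ) := by
    have h1 : ∀ θ : ℝ, (0:ℝ) < 1 - r * Real.cos θ := by
      intro θ; nlinarith [hsq θ, sq_nonneg (1 - r * Real.cos θ)]
    have h2 : ∀ θ : ℝ, (0:ℝ) < 1 + r * Real.cos θ := by
      intro θ; nlinarith [hsq θ, sq_nonneg (1 + r * Real.cos θ)]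
    have hq : Continuous fun θ : ℝ => (1 + r * Real.cos θ) / (1 - r * Real.cos θ) :=
      (continuous_const.add (continuous_const.mul Real.continuous_cos)).div
        (continuous_const.sub (continuous_const.mul Real.continuous_cos))
        (fun θ => (h1 θ).ne')
    have hart : Continuous fun θ : ℝ => artanh (r * Real.cos θ) := by
      exact continuous_const.mul (hq.log (fun θ => (div_pos (h2 θ) (h1 θ)).ne'))
    exact continuous_const.sub ((continuous_const.mul Real.continuous_cos).mul hart)
  have hint := intervalIntegral.integral_eq_sub_of_hasDerivAt
    (f := F) (f' := fun θ => 1 - 2 * r * Real.cos θ * artanh (r * Real.cos θ))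
    (a := 0) (b := 2*Real.pi) (fun t _ => hF t)
    (hcont.intervalIntegrable 0 (2*Real.pi))
  rw [hint]
  have hF0 : F 0 = 0 := by
    simp [hFdef, artanh]
  have hF2 : F (2*Real.pi) = -(2*Real.pi) + 2*c*(2*Real.pi) := by
    simp [hFdef, artanh, Real.sin_two_pi, Real.cos_two_pi]
  rw [hF0, hF2]
  have hpi := Real.pi_ne_zero
  field_simp
  ring
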